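/- arXiv:2011.08937 — 5 statements merged into one kernel-verified Lean document; each statement's English description precedes it below -/
import Mathlib

section
/- Let (Ω, μ) be a finite measure space, W a real inner product space, D a linear map from the real vector space of functions Ω → ℝ to W, and B a symmetric bilinear form on the real vector space of functions Ω → ℝ. Fix ε ∈ ℝ, τ > 0 and a positive integer M. Let φ_0, …, φ_M be measurable functions in L⁴(μ) and μ_1, …, μ_M measurable functions in L²(μ), and set δφ_m := (φ_m − φ_{m−1})/τ. Assume for every 1 ≤ m ≤ M: (i) ∫_Ω δφ_m · μ_m dμ + ‖D μ_m‖² = 0, and (ii) ∫_Ω (φ_m³ + (1−ε)φ_m) · δφ_m dμ + B(φ_m, δφ_m) − 2⟨D φ_{m−1}, D δφ_m⟩ − ∫_Ω μ_m · δφ_m dμ = 0. Define F(φ) := (1/4)∫_Ω φ⁴ dμ + ((1−ε)/2)∫_Ω φ² dμ − ‖D φ‖² + (1/2) B(φ, φ). Then for every 1 ≤ ℓ ≤ M: F(φ_ℓ) + τ Σ_{m=1}^{ℓ} ‖D μ_m‖² + τ² Σ_{m=1}^{ℓ} [ ((1−ε)/2) ∫_Ω (δφ_m)² dμ + ‖D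 δφ_m‖² + (1/4) ∫_Ω ((φ_m² − φ_{m−1}²)/τ)² dμ + (1/2) ∫_Ω (φ_m · δφ_m)² dμ + (1/2) B(δφ_m, δφ_m) ] = F(φ_0). -/
open MeasureTheory Finset
open scoped RealInnerProductSpace ENNReal

/-!
Write `a = φ_m`, `b = φ_{m-1}` and `a - b = τ δ`. Over one step each part of the energy changes by
an exact identity. The convex parts (the `L⁴` and `L²` integrals and `½ B`) are expanded around the
new value `a`, which produces `τ ∫ (a³ + (1-ε) a) δ + τ B(a, δ)` minus `τ²` remainders; the concave
part `-‖D ·‖²` is expanded around the old value `b`, producing `-2τ ⟪D b, D δ⟫ - τ² ‖D δ‖²`. The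
`τ`-terms add up to `τ` times the second scheme equation, i.e. to `τ ∫ μ δ`, which the first scheme
equation identifies with `-τ ‖D μ‖²`. Summing the one-step identities telescopes.
-/

instance ENNReal.HolderTriple.instFourFourTwo : ENNReal.HolderTriple 4 4 2 := ⟨by
  rw [← two_mul, show (4 : ℝ≥0∞) = 2 * 2 by norm_num, ENNReal.mul_inv (by simp) (by simp),
    ← mul_assoc, ENNReal.mul_inv_cancel (by simp) (by simp), one_mul]⟩

theorem norm_sq_sub_norm_sq_real {F : Type*} [NormedAddCommGroup F] [InnerProductSpace ℝ F]
    (x y : F) : ‖x‖ ^ 2 - ‖y‖ ^ 2 = 2 * ⟪y, x - y⟫ + ‖x - y‖ ^ 2 := by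
  nth_rw 1 [← add_sub_cancel y x, norm_add_sq_real]
  ring

theorem LinearMap.apply_self_sub_apply_self_of_symm {R M : Type*} [CommRing R] [AddCommGroup M]
    [Module R M] (B : M →ₗ[R] M →ₗ[R] R) (hB : ∀ u v, B u v = B v u) (x y : M) :
    B x x - B y y = 2 * B x (x - y) - B (x - y) (x - y) := by
  simp only [map_sub, LinearMap.sub_apply, hB y x]
  ring

theorem Finset.add_sum_Icc_eq_of_add_eq {G : Type*} [AddCommMonoid G] {E d : ℕ → G} {M : ℕ}
    (h : ∀ m, 1 ≤ m → m ≤ M → E m + d m = E (m - 1)) :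
    ∀ ℓ ≤ M, E ℓ + ∑ m ∈ Icc 1 ℓ, d m = E 0 := by
  intro ℓ hℓ
  induction ℓ with
  | zero => simp
  | succ n ih =>
    rw [sum_Icc_succ_top (Nat.le_add_left 1 n), add_comm _ (d (n + 1)), ← add_assoc,
      h (n + 1) (Nat.le_add_left 1 n) hℓ, Nat.add_sub_cancel, ih (Nat.le_of_succ_le hℓ)]

namespace MeasureTheory

variable {Ω : Type*} [MeasurableSpace Ω] {P : Measure Ω}

theorem MemLp.div_const {p : ℝ≥0∞} {f : Ω → ℝ} (hf : MemLp f p P) (c : ℝ) :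
    MemLp (fun x => f x / c) p P := by
  simpa only [div_eq_mul_inv] using hf.mul_const c⁻¹

theorem MemLp.integrable_pow_three_mul {f g : Ω → ℝ} (hf : MemLp f 4 P) (hg : MemLp g 4 P) :
    Integrable (fun x => f x ^ 3 * g x) P := by
  have hff : MemLp (fun x => f x * f x) 2 P := hf.mul' hf
  have hfg : MemLp (fun x => f x * g x) 2 P := hg.mul' hf
  exact (hff.integrable_mul hfg).congr (ae_of_all _ fun x => by simp only [Pi.mul_apply]; ring)

variable {τ : ℝ} {a b δ : Ω → ℝ}

theorem integral_sq_eq_of_backward_difference (hτ : τ ≠ 0) (ha : MemLp a 2 P)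
    (hb : MemLp b 2 P) (hδ : δ = fun x => (a x - b x) / τ) :
    ∫ x, a x ^ 2 ∂P
      = ∫ x, b x ^ 2 ∂P + 2 * τ * ∫ x, a x * δ x ∂P - τ ^ 2 * ∫ x, δ x ^ 2 ∂P := by
  have hδ2 : MemLp δ 2 P := hδ ▸ (ha.sub hb).div_const τ
  have iaδ : Integrable (fun x => a x * δ x) P := ha.integrable_mul hδ2
  have hpt : (fun x => a x ^ 2)
      = fun x => b x ^ 2 + 2 * τ * (a x * δ x) - τ ^ 2 * δ x ^ 2 := by
    subst hδ
    funext x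
    field_simp
    ring
  have ihead : Integrable (fun x => b x ^ 2 + 2 * τ * (a x * δ x)) P :=
    hb.integrable_sq.add (iaδ.const_mul _)
  rw [hpt, integral_sub ihead (hδ2.integrable_sq.const_mul _),
    integral_add hb.integrable_sq (iaδ.const_mul _), integral_const_mul, integral_const_mul]

theorem integral_pow_four_eq_of_backward_difference (hτ : τ ≠ 0) (ha : MemLp a 4 P)
    (hb : MemLp b 4 P) (hδ : δ = fun x => (a x - b x) / τ) :
    ∫ x, a x ^ 4 ∂P
      = ∫ x, b x ^ 4 ∂P + 4 * τ * ∫ x, a x ^ 3 * δ x ∂P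
        - τ ^ 2 * ∫ x, ((a x ^ 2 - b x ^ 2) / τ) ^ 2 ∂P
        - 2 * τ ^ 2 * ∫ x, (a x * δ x) ^ 2 ∂P := by
  have hδ4 : MemLp δ 4 P := hδ ▸ (ha.sub hb).div_const τ
  have iaδ : Integrable (fun x => (a x * δ x) ^ 2) P := (hδ4.mul' ha).integrable_sq
  have ib : Integrable (fun x => b x ^ 4) P :=
    (hb.mul' hb).integrable_sq.congr (ae_of_all _ fun x => by ring)
  have ia3δ : Integrable (fun x => a x ^ 3 * δ x) P := ha.integrable_pow_three_mul hδ4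
  have iab : Integrable (fun x => ((a x ^ 2 - b x ^ 2) / τ) ^ 2) P :=
    (((ha.mul' ha).sub (hb.mul' hb)).div_const τ).integrable_sq.congr
      (ae_of_all _ fun x => by simp only [Pi.sub_apply]; ring)
  have hpt : (fun x => a x ^ 4)
      = fun x => b x ^ 4 + 4 * τ * (a x ^ 3 * δ x) - τ ^ 2 * ((a x ^ 2 - b x ^ 2) / τ) ^ 2
        - 2 * τ ^ 2 * (a x * δ x) ^ 2 := by
    subst hδ
    funext x
    field_simp
    ring
  have i1 : Integrable (fun x => b x ^ 4 + 4 * τ * (a x ^ 3 * δ x)) P :=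
    ib.add (ia3δ.const_mul _)
  have i2 : Integrable
      (fun x => b x ^ 4 + 4 * τ * (a x ^ 3 * δ x) - τ ^ 2 * ((a x ^ 2 - b x ^ 2) / τ) ^ 2) P :=
    i1.sub (iab.const_mul _)
  rw [hpt, integral_sub i2 (iaδ.const_mul _), integral_sub i1 (iab.const_mul _),
    integral_add ib (ia3δ.const_mul _), integral_const_mul, integral_const_mul, integral_const_mul]

end MeasureTheory

section EnergyLaw

variable {Ω : Type*} [MeasurableSpace Ω] (P : Measure Ω)
  {W : Type*} [NormedAddCommGroup W] [InnerProductSpace ℝ W]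
  (D : (Ω → ℝ) →ₗ[ℝ] W) (B : (Ω → ℝ) →ₗ[ℝ] (Ω → ℝ) →ₗ[ℝ] ℝ) (ε : ℝ)

noncomputable def pfcEnergy (ψ : Ω → ℝ) : ℝ :=
  (1 / 4) * (∫ x, (ψ x) ^ 4 ∂P) + ((1 - ε) / 2) * (∫ x, (ψ x) ^ 2 ∂P)
    - ‖D ψ‖ ^ 2 + (1 / 2) * B ψ ψ

variable {P D B ε}

theorem pfcEnergy_step [IsFiniteMeasure P] (hB : ∀ u v, B u v = B v u) {τ : ℝ} (hτ : τ ≠ 0)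
    {a b δ μ : Ω → ℝ} (ha : MemLp a 4 P) (hb : MemLp b 4 P)
    (hδ : δ = fun x => (a x - b x) / τ)
    (hscheme1 : (∫ x, δ x * μ x ∂P) + ‖D μ‖ ^ 2 = 0)
    (hscheme2 : (∫ x, ((a x) ^ 3 + (1 - ε) * a x) * δ x ∂P)
        + B a δ - 2 * ⟪D b, D δ⟫ - (∫ x, μ x * δ x ∂P) = 0) :
    pfcEnergy P D B ε a
      + (τ * ‖D μ‖ ^ 2
        + τ ^ 2 * (((1 - ε) / 2) * (∫ x, (δ x) ^ 2 ∂P)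
          + ‖D δ‖ ^ 2
          + (1 / 4) * (∫ x, (((a x) ^ 2 - (b x) ^ 2) / τ) ^ 2 ∂P)
          + (1 / 2) * (∫ x, (a x * δ x) ^ 2 ∂P)
          + (1 / 2) * B δ δ))
      = pfcEnergy P D B ε b := by
  have ha2 : MemLp a 2 P := ha.mono_exponent (by norm_num)
  have hb2 : MemLp b 2 P := hb.mono_exponent (by norm_num)
  have hδ4 : MemLp δ 4 P := hδ ▸ (ha.sub hb).div_const τ
  have iaδ : Integrable (fun x => a x * δ x) P :=
    ha2.integrable_mul (hδ4.mono_exponent (by norm_num) : MemLp δ 2 P)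
  have hab : a - b = τ • δ := by
    subst hδ
    funext x
    simp only [Pi.sub_apply, Pi.smul_apply, smul_eq_mul]
    field_simp
  have hquartic := integral_pow_four_eq_of_backward_difference hτ ha hb hδ
  have hquadratic := integral_sq_eq_of_backward_difference hτ ha2 hb2 hδ
  have hconcave : ‖D a‖ ^ 2 - ‖D b‖ ^ 2 = 2 * τ * ⟪D b, D δ⟫ + τ ^ 2 * ‖D δ‖ ^ 2 := by
    rw [norm_sq_sub_norm_sq_real, ← map_sub, hab, map_smul, inner_smul_right, norm_smul, mul_pow,
      Real.norm_eq_abs, sq_abs]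
    ring
  have hconvex : B a a - B b b = 2 * τ * B a δ - τ ^ 2 * B δ δ := by
    rw [LinearMap.apply_self_sub_apply_self_of_symm B hB, hab]
    simp only [map_smul, LinearMap.smul_apply, smul_eq_mul]
    ring
  have hsplit : ∫ x, ((a x) ^ 3 + (1 - ε) * a x) * δ x ∂P
      = ∫ x, a x ^ 3 * δ x ∂P + (1 - ε) * ∫ x, a x * δ x ∂P := by
    rw [← integral_const_mul, ← integral_add (ha.integrable_pow_three_mul hδ4) (iaδ.const_mul _)]
    congr 1
    funext x
    ring
  have hcomm : ∫ x, δ x * μ x ∂P = ∫ x, μ x * δ x ∂P := by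
    simp only [mul_comm]
  rw [hsplit] at hscheme2
  rw [hcomm] at hscheme1
  unfold pfcEnergy
  linear_combination (1 / 4) * hquartic + ((1 - ε) / 2) * hquadratic - hconcave
    + (1 / 2) * hconvex + τ * hscheme2 + τ * hscheme1

end EnergyLaw

theorem pfc_discrete_energy_law_general
    {Ω : Type*} [MeasurableSpace Ω] (P : Measure Ω) [IsFiniteMeasure P]
    {W : Type*} [NormedAddCommGroup W] [InnerProductSpace ℝ W]
    (D : (Ω → ℝ) →ₗ[ℝ] W)
    (B : (Ω → ℝ) →ₗ[ℝ] (Ω → ℝ) →ₗ[ℝ] ℝ)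
    (hBsymm : ∀ u v : Ω → ℝ, B u v = B v u)
    (ε τ : ℝ) (hτ : 0 < τ) (M : ℕ)
    (φ μc : ℕ → Ω → ℝ)
    (hφL4 : ∀ m ≤ M, MemLp (φ m) 4 P)
    (δφ : ℕ → Ω → ℝ)
    (hδφ : ∀ m, δφ m = fun x => (φ m x - φ (m - 1) x) / τ)
    (hscheme1 : ∀ m, 1 ≤ m → m ≤ M →
      (∫ x, δφ m x * μc m x ∂P) + ‖D (μc m)‖ ^ 2 = 0)
    (hscheme2 : ∀ m, 1 ≤ m → m ≤ M →
      (∫ x, ((φ m x) ^ 3 + (1 - ε) * φ m x) * δφ m x ∂P)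
        + B (φ m) (δφ m) - 2 * ⟪D (φ (m - 1)), D (δφ m)⟫
        - (∫ x, μc m x * δφ m x ∂P) = 0)
    (F : (Ω → ℝ) → ℝ)
    (hF : ∀ ψ : Ω → ℝ, F ψ =
      (1 / 4) * (∫ x, (ψ x) ^ 4 ∂P) + ((1 - ε) / 2) * (∫ x, (ψ x) ^ 2 ∂P)
        - ‖D ψ‖ ^ 2 + (1 / 2) * B ψ ψ) :
    ∀ ℓ, 1 ≤ ℓ → ℓ ≤ M →
      F (φ ℓ) + τ * (∑ m ∈ Icc 1 ℓ, ‖D (μc m)‖ ^ 2)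
        + τ ^ 2 * (∑ m ∈ Icc 1 ℓ,
            (((1 - ε) / 2) * (∫ x, (δφ m x) ^ 2 ∂P)
              + ‖D (δφ m)‖ ^ 2
              + (1 / 4) * (∫ x, (((φ m x) ^ 2 - (φ (m - 1) x) ^ 2) / τ) ^ 2 ∂P)
              + (1 / 2) * (∫ x, (φ m x * δφ m x) ^ 2 ∂P)
              + (1 / 2) * B (δφ m) (δφ m)))
        = F (φ 0) := by
  obtain rfl : F = pfcEnergy P D B ε := funext hF
  intro ℓ _ hℓ
  rw [mul_sum, mul_sum, add_assoc, ← sum_add_distrib]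
  refine add_sum_Icc_eq_of_add_eq (E := fun m => pfcEnergy P D B ε (φ m))
    (fun m hm hmM => ?_) ℓ hℓ
  exact pfcEnergy_step hBsymm hτ.ne' (hφL4 m hmM) (hφL4 (m - 1) ((m.sub_le 1).trans hmM))
    (hδφ m) (hscheme1 m hm hmM) (hscheme2 m hm hmM)

/-- Discrete energy law for the convex-splitting C⁰-IP scheme for the
phase field crystal equation (Lemma 3.6), stated abstractly. -/
theorem pfc_discrete_energy_law
    {Ω : Type*} [MeasurableSpace Ω] (P : Measure Ω) [IsFiniteMeasure P]
    {W : Type*} [NormedAddCommGroup W] [InnerProductSpace ℝ W]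
    (D : (Ω → ℝ) →ₗ[ℝ] W)
    (B : (Ω → ℝ) →ₗ[ℝ] (Ω → ℝ) →ₗ[ℝ] ℝ)
    (hBsymm : ∀ u v : Ω → ℝ, B u v = B v u)
    (ε τ : ℝ) (hτ : 0 < τ) (M : ℕ) (hM : 0 < M)
    (φ μc : ℕ → Ω → ℝ)
    (hφmeas : ∀ m ≤ M, Measurable (φ m))
    (hφL4 : ∀ m ≤ M, MemLp (φ m) 4 P)
    (hμmeas : ∀ m, 1 ≤ m → m ≤ M → Measurable (μc m))
    (hμL2 : ∀ m, 1 ≤ m → m ≤ M → MemLp (μc m) 2 P)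
    (δφ : ℕ → Ω → ℝ)
    (hδφ : ∀ m, δφ m = fun x => (φ m x - φ (m - 1) x) / τ)
    (hscheme1 : ∀ m, 1 ≤ m → m ≤ M →
      (∫ x, δφ m x * μc m x ∂P) + ‖D (μc m)‖ ^ 2 = 0)
    (hscheme2 : ∀ m, 1 ≤ m → m ≤ M →
      (∫ x, ((φ m x) ^ 3 + (1 - ε) * φ m x) * δφ m x ∂P)
        + B (φ m) (δφ m) - 2 * ⟪D (φ (m - 1)), D (δφ m)⟫
        - (∫ x, μc m x * δφ m x ∂P) = 0)
    (F : (Ω → ℝ) → ℝ)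
    (hF : ∀ ψ : Ω → ℝ, F ψ =
      (1 / 4) * (∫ x, (ψ x) ^ 4 ∂P) + ((1 - ε) / 2) * (∫ x, (ψ x) ^ 2 ∂P)
        - ‖D ψ‖ ^ 2 + (1 / 2) * B ψ ψ) :
    ∀ ℓ, 1 ≤ ℓ → ℓ ≤ M →
      F (φ ℓ) + τ * (∑ m ∈ Icc 1 ℓ, ‖D (μc m)‖ ^ 2)
        + τ ^ 2 * (∑ m ∈ Icc 1 ℓ,
            (((1 - ε) / 2) * (∫ x, (δφ m x) ^ 2 ∂P)
              + ‖D (δφ m)‖ ^ 2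
              + (1 / 4) * (∫ x, (((φ m x) ^ 2 - (φ (m - 1) x) ^ 2) / τ) ^ 2 ∂P)
              + (1 / 2) * (∫ x, (φ m x * δφ m x) ^ 2 ∂P)
              + (1 / 2) * B (δφ m) (δφ m)))
        = F (φ 0) :=
  pfc_discrete_energy_law_general P D B hBsymm ε τ hτ M φ μc hφL4 δφ hδφ hscheme1 hscheme2 F hF
end

section
/- Let (Ω, μ) be a finite measure space and V a finite-dimensional subspace of the real vector space of measurable functions Ω → ℝ such that every v ∈ V lies in L⁴(μ). Let N be a norm on V, let q be a symmetric bilinear form on V satisfying q(v, v) ≥ C₀ N(v)² for all v ∈ V and some constant C₀ > 0, let L : V → ℝ be a linear functional, let c ∈ ℝ, and let ε ≤ 1. Define G : V → ℝ by G(v) := (1/2) q(v, v) + (1/4) ∫_Ω (v + c)⁴ dμ + ((1−ε)/2) ∫_Ω (v + c)² dμ + L(v). Then G has a unique global minimizer: there exists a unique v* ∈ V such that G(v*) ≤ G(v) for all v ∈ V. -/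
/-!
Equip `V` with the norm `N`. The quadratic part `v ↦ q v v` is strictly convex, because for
`a + b = 1` its defect from affinity at `v, w` is `a b q(v - w, v - w) > 0`; the integral terms are
integrals of even powers of affine functions, hence convex (with nonnegative weights as `ε ≤ 1`);
so `G` is strictly convex. As the integrals are nonnegative, `G v ≥ (C₀/2) N(v)² - ‖L‖ N(v)`, so
`G` is coercive; being convex on a finite-dimensional space it is continuous, hence attains its
infimum, at a single point by strict convexity.
-/

open MeasureTheory Filter Set

theorem existsUnique_forall_le_of_strictConvexOn {E : Type*} [NormedAddCommGroup E]
    [NormedSpace ℝ E] [FiniteDimensional ℝ E] {G : E → ℝ}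
    (hG : StrictConvexOn ℝ univ G) (hGc : Tendsto G (cocompact E) atTop) :
    ∃! x : E, ∀ y, G x ≤ G y := by
  have hcont : Continuous G := continuousOn_univ.mp (hG.convexOn.continuousOn isOpen_univ)
  obtain ⟨x, hx⟩ := hcont.exists_forall_le hGc
  exact ⟨x, hx, fun y hy => hG.eq_of_isMinOn (isMinOn_univ_iff.mpr hy)
    (isMinOn_univ_iff.mpr hx) (mem_univ _) (mem_univ _)⟩

theorem tendsto_cocompact_atTop_of_sq_sub_le {E : Type*} [NormedAddCommGroup E] [ProperSpace E]
    {f : E → ℝ} {a b : ℝ} (ha : 0 < a) (hf : ∀ v, a * ‖v‖ ^ 2 - b * ‖v‖ ≤ f v) :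
    Tendsto f (cocompact E) atTop := by
  have hpoly : Tendsto (fun t : ℝ => t * (a * t - b)) atTop atTop :=
    tendsto_id.atTop_mul_atTop₀ (tendsto_atTop_add_const_right _ _ (tendsto_id.const_mul_atTop ha))
  refine tendsto_atTop_mono (fun v => ?_) (hpoly.comp tendsto_norm_cocompact_atTop)
  simpa only [Function.comp_apply, mul_sub, sq, mul_left_comm, mul_comm] using hf v

theorem bilin_diag_combination_defect {E : Type*} [AddCommGroup E] [Module ℝ E]
    (f : E →ₗ[ℝ] E →ₗ[ℝ] ℝ) (v w : E) {a b : ℝ} (hab : a + b = 1) :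
    a * f v v + b * f w w - f (a • v + b • w) (a • v + b • w) = a * b * f (v - w) (v - w) := by
  obtain rfl : b = 1 - a := by linarith
  simp only [map_add, map_smul, map_sub, LinearMap.add_apply, LinearMap.smul_apply,
    LinearMap.sub_apply, smul_eq_mul]
  ring

theorem strictConvexOn_bilin_diag {E : Type*} [AddCommGroup E] [Module ℝ E]
    (f : E →ₗ[ℝ] E →ₗ[ℝ] ℝ) (hf : ∀ v ≠ 0, 0 < f v v) :
    StrictConvexOn ℝ univ (fun v => f v v) := by
  refine ⟨convex_univ, fun v _ w _ hvw a b ha hb hab => ?_⟩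
  have hdefect := bilin_diag_combination_defect f v w hab
  have hpos : 0 < a * b * f (v - w) (v - w) := by
    have := hf (v - w) (sub_ne_zero.mpr hvw)
    positivity
  simp only [smul_eq_mul]
  linarith

theorem convexOn_integral {Ω E : Type*} [MeasurableSpace Ω] {μ : Measure Ω}
    [AddCommGroup E] [Module ℝ E] {s : Set E} (hs : Convex ℝ s) {F : E → Ω → ℝ}
    (hF : ∀ x, ConvexOn ℝ s (F · x)) (hint : ∀ v ∈ s, Integrable (F v) μ) :
    ConvexOn ℝ s (fun v => ∫ x, F v x ∂μ) := by
  refine ⟨hs, fun v hv w hw a b ha hb hab => ?_⟩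
  have hva := (hint v hv).const_mul a
  have hwb := (hint w hw).const_mul b
  calc ∫ x, F (a • v + b • w) x ∂μ ≤ ∫ x, (a * F v x + b * F w x) ∂μ :=
        integral_mono (hint _ (hs hv hw ha hb hab)) (hva.add hwb)
          fun x => (hF x).2 hv hw ha hb hab
    _ = a • ∫ x, F v x ∂μ + b • ∫ x, F w x ∂μ := by
        rw [integral_add hva hwb, integral_const_mul, integral_const_mul, smul_eq_mul, smul_eq_mul]

theorem MemLp.integrable_pow {Ω : Type*} [MeasurableSpace Ω] {μ : Measure Ω} [IsFiniteMeasure μ]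
    {f : Ω → ℝ} {n : ℕ} (hf : MemLp f n μ) : Integrable (fun x => f x ^ n) μ :=
  hf.integrable_norm_pow'.mono' (hf.1.pow n) (ae_of_all _ fun x => (norm_pow (f x) n).le)

theorem existsUnique_forall_le_bilin_add_convex_add_linear {E : Type*} [NormedAddCommGroup E]
    [NormedSpace ℝ E] [FiniteDimensional ℝ E] (q : E →ₗ[ℝ] E →ₗ[ℝ] ℝ) {C₀ : ℝ} (hC₀ : 0 < C₀)
    (hq : ∀ v, C₀ * ‖v‖ ^ 2 ≤ q v v) {R : E → ℝ} (hR : ConvexOn ℝ univ R) (hR0 : ∀ v, 0 ≤ R v)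
    (L : E →ₗ[ℝ] ℝ) {G : E → ℝ} (hG : ∀ v, G v = q v v + R v + L v) :
    ∃! x : E, ∀ y, G x ≤ G y := by
  have hq_pos : ∀ v ≠ 0, 0 < q v v := fun v hv =>
    (by have := norm_pos_iff.mpr hv; positivity : 0 < C₀ * ‖v‖ ^ 2).trans_le (hq v)
  obtain rfl : G = fun v => q v v + R v + L v := funext hG
  refine existsUnique_forall_le_of_strictConvexOn
    (((strictConvexOn_bilin_diag q hq_pos).add_convexOn hR).add_convexOn (L.convexOn convex_univ))
    (tendsto_cocompact_atTop_of_sq_sub_le hC₀ (b := ‖LinearMap.toContinuousLinearMap L‖)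
      fun v => ?_)
  have hLv := (LinearMap.toContinuousLinearMap L).le_opNorm v
  rw [Real.norm_eq_abs, LinearMap.coe_toContinuousLinearMap'] at hLv
  nlinarith [hq v, hR0 v, neg_abs_le (L v)]

theorem pfc_unique_minimizer_general
    {Ω : Type*} [MeasurableSpace Ω] (P : Measure Ω) [IsFiniteMeasure P]
    (V : Submodule ℝ (Ω → ℝ)) [FiniteDimensional ℝ V]
    (hVL4 : ∀ v : Ω → ℝ, v ∈ V → MemLp v 4 P)
    (N : V → ℝ)
    (hN0 : ∀ v : V, N v = 0 ↔ v = 0)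
    (hNsmul : ∀ (a : ℝ) (v : V), N (a • v) = |a| * N v)
    (hNtri : ∀ v w : V, N (v + w) ≤ N v + N w)
    (q : V →ₗ[ℝ] V →ₗ[ℝ] ℝ)
    (C₀ : ℝ) (hC₀ : 0 < C₀)
    (hqcoer : ∀ v : V, C₀ * (N v) ^ 2 ≤ q v v)
    (L : V →ₗ[ℝ] ℝ) (c : ℝ) (ε : ℝ) (hε : ε ≤ 1)
    (G : V → ℝ)
    (hG : ∀ v : V, G v =
      (1 / 2) * q v v + (1 / 4) * (∫ x, ((v : Ω → ℝ) x + c) ^ 4 ∂P)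
        + ((1 - ε) / 2) * (∫ x, ((v : Ω → ℝ) x + c) ^ 2 ∂P) + L v) :
    ∃! vstar : V, ∀ v : V, G vstar ≤ G v := by
  let : Norm V := ⟨N⟩
  have core : NormedSpace.Core ℝ V :=
    { norm_nonneg := apply_nonneg (Seminorm.of N hNtri hNsmul)
      norm_smul := hNsmul
      norm_triangle := hNtri
      norm_eq_zero_iff := hN0 }
  let := NormedAddCommGroup.ofCore core
  let := NormedSpace.ofCore core
  let I : ℕ → V → ℝ := fun n v => ∫ x, ((v : Ω → ℝ) x + c) ^ n ∂P
  have hI_convex : ∀ n, Even n → n ≤ 4 → ConvexOn ℝ univ (I n) := by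
    intro n hn hn4
    have hpoint (x : Ω) : ConvexOn ℝ univ fun v : V => ((v : Ω → ℝ) x + c) ^ n := by
      have h := (hn.convexOn_pow.translate_left c).comp_linearMap (LinearMap.proj x ∘ₗ V.subtype)
      rwa [preimage_univ, preimage_univ] at h
    exact convexOn_integral convex_univ hpoint fun v _ => MemLp.integrable_pow
      (((hVL4 v v.2).add (memLp_const c)).mono_exponent (by exact_mod_cast hn4))
  have hI_nonneg : ∀ n, Even n → ∀ v, 0 ≤ I n v := fun n hn v =>
    integral_nonneg fun x => hn.pow_nonneg _
  refine existsUnique_forall_le_bilin_add_convex_add_linear ((1 / 2 : ℝ) • q) (half_pos hC₀)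
    (fun v => ?_) (((hI_convex 4 (by decide) le_rfl).smul (by norm_num : (0 : ℝ) ≤ 1 / 4)).add
      ((hI_convex 2 (by decide) (by norm_num)).smul (by linarith : (0 : ℝ) ≤ (1 - ε) / 2)))
    (fun v => add_nonneg (mul_nonneg (by norm_num) (hI_nonneg 4 (by decide) v))
      (mul_nonneg (by linarith) (hI_nonneg 2 (by decide) v)))
    L fun v => ?_
  · show C₀ / 2 * N v ^ 2 ≤ _
    simp only [LinearMap.smul_apply, smul_eq_mul]
    linarith [hqcoer v]
  · simp only [hG, I, LinearMap.smul_apply, Pi.add_apply, smul_eq_mul]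
    ring

/-- Unique solvability of the convex-splitting scheme (Lemma 3.4, abstract form):
a coercive quadratic part plus the convex quartic/quadratic integrals plus a
linear part has a unique global minimizer on a finite-dimensional space. -/
theorem pfc_unique_minimizer
    {Ω : Type*} [MeasurableSpace Ω] (P : Measure Ω) [IsFiniteMeasure P]
    (V : Submodule ℝ (Ω → ℝ)) [FiniteDimensional ℝ V]
    (hVL4 : ∀ v : Ω → ℝ, v ∈ V → MemLp v 4 P)
    (N : V → ℝ)
    (hN0 : ∀ v : V, N v = 0 ↔ v = 0)
    (hNsmul : ∀ (a : ℝ) (v : V), N (a • v) = |a| * N v)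
    (hNtri : ∀ v w : V, N (v + w) ≤ N v + N w)
    (q : V →ₗ[ℝ] V →ₗ[ℝ] ℝ)
    (hqsymm : ∀ v w : V, q v w = q w v)
    (C₀ : ℝ) (hC₀ : 0 < C₀)
    (hqcoer : ∀ v : V, C₀ * (N v) ^ 2 ≤ q v v)
    (L : V →ₗ[ℝ] ℝ) (c : ℝ) (ε : ℝ) (hε : ε ≤ 1)
    (G : V → ℝ)
    (hG : ∀ v : V, G v =
      (1 / 2) * q v v + (1 / 4) * (∫ x, ((v : Ω → ℝ) x + c) ^ 4 ∂P)
        + ((1 - ε) / 2) * (∫ x, ((v : Ω → ℝ) x + c) ^ 2 ∂P) + L v) :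
    ∃! vstar : V, ∀ v : V, G vstar ≤ G v :=
  pfc_unique_minimizer_general P V hVL4 N hN0 hNsmul hNtri q C₀ hC₀ hqcoer L c ε hε G hG
end

section
/- Let ε < 2, γ ≥ 0, C_coer > 0 and C ≥ 0 be real numbers with (2 − ε) · C_coer > 1 + γ. Suppose nonnegative real numbers A, N، G satisfy ((2 − ε)/2) A² + (C_coer/2) N² ≤ C + G² and G² ≤ √(1 + γ) · A · N. Then N² ≤ 2(2 − ε) C / ((2 − ε) C_coer − (1 + γ)) and A² ≤ (4/(2 − ε)) · ( C + ((1 + γ)/(2 − ε)) · N² ). -/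
/-!
Write `a = 2 - ε > 0`, `κ = 1 + γ` and `c = C_coer`. The two hypotheses combine into the energy inequality
`a/2 A² + c/2 N² ≤ C + √κ · A · N`, and the cross term is absorbed by the weighted Young inequality
`√κ A N ≤ t/2 A² + κ N² / (2t)`. With `t = a` the `A²` terms cancel, leaving `(a c - κ) N² ≤ 2 a C`;
with `t = a/2` half of the `A²` term survives and the nonnegative `N²` term on the left is dropped.
-/

lemma mul_le_half_mul_sq_add_sq_div {t : ℝ} (ht : 0 < t) (x y : ℝ) :
    x * y ≤ t / 2 * x ^ 2 + y ^ 2 / (2 * t) := by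
  have h : 0 ≤ (t * x - y) ^ 2 / (2 * t) := by positivity
  have expand : (t * x - y) ^ 2 / (2 * t) = t / 2 * x ^ 2 + y ^ 2 / (2 * t) - x * y := by
    field_simp
    ring
  linarith

lemma sqrt_mul_mul_le {κ t : ℝ} (hκ : 0 ≤ κ) (ht : 0 < t) (A N : ℝ) :
    √κ * A * N ≤ t / 2 * A ^ 2 + κ * N ^ 2 / (2 * t) := by
  have h := mul_le_half_mul_sq_add_sq_div ht A (√κ * N)
  rwa [mul_pow, Real.sq_sqrt hκ, ← mul_assoc, mul_comm A] at h

section EnergyInequality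

variable {a c κ C A N : ℝ} (ha : 0 < a) (hκ : 0 ≤ κ)
  (hE : a / 2 * A ^ 2 + c / 2 * N ^ 2 ≤ C + √κ * A * N)
include ha hκ hE

lemma sq_right_le_of_energy_le (hcκ : κ < a * c) : N ^ 2 ≤ 2 * a * C / (a * c - κ) := by
  have young := sqrt_mul_mul_le hκ ha A N
  have hN : (a * c - κ) * N ^ 2 ≤ 2 * a * C := calc
    (a * c - κ) * N ^ 2 = 2 * a * (c / 2 * N ^ 2 - κ * N ^ 2 / (2 * a)) := by
      field_simp
    _ ≤ 2 * a * C := by gcongr; linarith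
  rw [le_div_iff₀ (by linarith)]
  linarith

lemma sq_left_le_of_energy_le (hc : 0 ≤ c) : A ^ 2 ≤ 4 / a * (C + κ / a * N ^ 2) := by
  have young := sqrt_mul_mul_le hκ (half_pos ha) A N
  have hcN : 0 ≤ c / 2 * N ^ 2 := by positivity
  calc A ^ 2 = 4 / a * (a / 4 * A ^ 2) := by field_simp
    _ ≤ 4 / a * (C + κ / a * N ^ 2) := by
      gcongr
      have : κ * N ^ 2 / (2 * (a / 2)) = κ / a * N ^ 2 := by field_simp
      linarith

end EnergyInequality

theorem pfc_stability_core_general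
    (ε γ C_coer C : ℝ) (hε : ε < 2) (hγ : 0 ≤ γ) (hcoer : 0 < C_coer)
    (hsmall : 1 + γ < (2 - ε) * C_coer)
    (A N G : ℝ)
    (h1 : ((2 - ε) / 2) * A ^ 2 + (C_coer / 2) * N ^ 2 ≤ C + G ^ 2)
    (h2 : G ^ 2 ≤ Real.sqrt (1 + γ) * A * N) :
    N ^ 2 ≤ 2 * (2 - ε) * C / ((2 - ε) * C_coer - (1 + γ)) ∧
      A ^ 2 ≤ (4 / (2 - ε)) * (C + ((1 + γ) / (2 - ε)) * N ^ 2) := by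
  have ha : 0 < 2 - ε := by linarith
  have hκ : 0 ≤ 1 + γ := by linarith
  have hE : (2 - ε) / 2 * A ^ 2 + C_coer / 2 * N ^ 2 ≤ C + √(1 + γ) * A * N := by linarith
  exact ⟨sq_right_le_of_energy_le ha hκ hE hsmall, sq_left_le_of_energy_le ha hκ hE hcoer.le⟩

/-- Real-number core of the a priori stability estimate (Lemma 3.7). -/
theorem pfc_stability_core
    (ε γ C_coer C : ℝ) (hε : ε < 2) (hγ : 0 ≤ γ) (hcoer : 0 < C_coer)
    (hC : 0 ≤ C) (hsmall : 1 + γ < (2 - ε) * C_coer)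
    (A N G : ℝ) (hA : 0 ≤ A) (hN : 0 ≤ N) (hG : 0 ≤ G)
    (h1 : ((2 - ε) / 2) * A ^ 2 + (C_coer / 2) * N ^ 2 ≤ C + G ^ 2)
    (h2 : G ^ 2 ≤ Real.sqrt (1 + γ) * A * N) :
    N ^ 2 ≤ 2 * (2 - ε) * C / ((2 - ε) * C_coer - (1 + γ)) ∧
      A ^ 2 ≤ (4 / (2 - ε)) * (C + ((1 + γ) / (2 - ε)) * N ^ 2) :=
  pfc_stability_core_general ε γ C_coer C hε hγ hcoer hsmall A N G h1 h2
end

section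
/- Let V be a finite-dimensional real inner product space, W a real inner product space, D : V → W an injective linear map, and C_P ≥ 0 a constant with ‖v‖_V ≤ C_P ‖D v‖_W for all v ∈ V. Suppose ζ, r ∈ V and g ∈ W satisfy ⟨ζ, ν⟩_V = −⟨g, D ν⟩_W + ⟨r, ν⟩_V for all ν ∈ V, and let Tζ ∈ V be the unique element with ⟨D(Tζ), D(χ)⟩_W = ⟨ζ, χ⟩_V for all χ ∈ V. Then ‖D(Tζ)‖²_W ≤ 2 ‖g‖²_W + 2 C_P² ‖r‖²_V. -/
open scoped RealInnerProductSpace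

/-- Abstract form of Lemma 4.1 of the paper: bound on the discrete negative
norm ‖D(Tζ)‖ of a functional given by a gradient term and a lower-order term,
via Cauchy–Schwarz and a Poincaré inequality. -/
theorem discrete_negative_norm_bound
    {V : Type*} [NormedAddCommGroup V] [InnerProductSpace ℝ V]
    [FiniteDimensional ℝ V]
    {W : Type*} [NormedAddCommGroup W] [InnerProductSpace ℝ W]
    (D : V →ₗ[ℝ] W) (hD : Function.Injective D)
    (C_P : ℝ) (hCP : 0 ≤ C_P)
    (hPoincare : ∀ v : V, ‖v‖ ≤ C_P * ‖D v‖)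
    (ζ r : V) (g : W)
    (hζ : ∀ ν : V, ⟪ζ, ν⟫ = -⟪g, D ν⟫ + ⟪r, ν⟫)
    (Tζ : V) (hTζ : ∀ χ : V, ⟪D Tζ, D χ⟫ = ⟪ζ, χ⟫) :
    ‖D Tζ‖ ^ 2 ≤ 2 * ‖g‖ ^ 2 + 2 * C_P ^ 2 * ‖r‖ ^ 2 := by
  have key : ‖D Tζ‖ ^ 2 ≤ (‖g‖ + C_P * ‖r‖) * ‖D Tζ‖ := by
    have h1 : ‖D Tζ‖ ^ 2 = -⟪g, D Tζ⟫ + ⟪r, Tζ⟫ := by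
      rw [← hζ, ← hTζ, ← real_inner_self_eq_norm_sq]
    calc ‖D Tζ‖ ^ 2 = -⟪g, D Tζ⟫ + ⟪r, Tζ⟫ := h1
      _ ≤ ‖g‖ * ‖D Tζ‖ + ‖r‖ * ‖Tζ‖ := by
          have := abs_real_inner_le_norm g (D Tζ)
          have := abs_real_inner_le_norm r Tζ
          nlinarith [abs_nonneg (⟪g, D Tζ⟫), neg_abs_le (⟪g, D Tζ⟫),
            le_abs_self (⟪r, Tζ⟫)]
      _ ≤ ‖g‖ * ‖D Tζ‖ + ‖r‖ * (C_P * ‖D Tζ‖) := by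
          have := hPoincare Tζ
          nlinarith [norm_nonneg r]
      _ = (‖g‖ + C_P * ‖r‖) * ‖D Tζ‖ := by ring
  have hn : ‖D Tζ‖ ≤ ‖g‖ + C_P * ‖r‖ := by
    rcases eq_or_lt_of_le (norm_nonneg (D Tζ)) with h | h
    · nlinarith [norm_nonneg g, norm_nonneg r]
    · nlinarith
  nlinarith [norm_nonneg g, norm_nonneg r, norm_nonneg (D Tζ),
    sq_nonneg (‖g‖ - C_P * ‖r‖), mul_nonneg hCP (norm_nonneg r)]
end

section
/- Let E be a real Banach space, let a < b be real numbers, and let u : ℝ → E be twice continuously differentiable on [a, b] with first derivative u′ and second derivative u″. Then ‖ (u(b) − u(a))/(b − a) − u′(b) ‖² ≤ ((b − a)/3) · ∫_a^b ‖u″(s)‖² ds. -/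
/-!
Integration by parts gives the Taylor identity
`(u b - u a) / (b - a) - u' b = -(b - a)⁻¹ ∫_a^b (s - a) u''(s) ds`, and the Cauchy–Schwarz
inequality together with `∫_a^b (s - a)² ds = (b - a)³ / 3` bounds the square of the right-hand
side by `(b - a) / 3 ∫_a^b ‖u''‖²`.
-/

open MeasureTheory Set
open scoped Interval

theorem sq_integral_mul_le_integral_sq_mul_integral_sq {α : Type*} [MeasurableSpace α]
    {μ : Measure α} {f g : α → ℝ} (hf : Integrable (fun x ↦ f x ^ 2) μ)
    (hg : Integrable (fun x ↦ g x ^ 2) μ) (hfg : Integrable (fun x ↦ f x * g x) μ) :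
    (∫ x, f x * g x ∂μ) ^ 2 ≤ (∫ x, f x ^ 2 ∂μ) * ∫ x, g x ^ 2 ∂μ := by
  have hquad : ∀ t : ℝ, 0 ≤ (∫ x, f x ^ 2 ∂μ) * (t * t) + 2 * (∫ x, f x * g x ∂μ) * t +
      ∫ x, g x ^ 2 ∂μ := fun t ↦
    calc 0 ≤ ∫ x, (t * f x + g x) ^ 2 ∂μ := integral_nonneg fun x ↦ sq_nonneg _
      _ = ∫ x, (t ^ 2 * f x ^ 2 + 2 * t * (f x * g x) + g x ^ 2) ∂μ := by
          congr with x; ring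
      _ = _ := by
          rw [integral_add (by fun_prop) hg, integral_add (by fun_prop) (by fun_prop),
            integral_const_mul, integral_const_mul]
          ring
  have hdiscrim := discrim_le_zero hquad
  rw [discrim] at hdiscrim
  linarith

theorem integral_sq_sub_left (a b : ℝ) : ∫ s in a..b, (s - a) ^ 2 = (b - a) ^ 3 / 3 := by
  rw [intervalIntegral.integral_comp_sub_right (· ^ 2), sub_self, integral_pow]
  ring

section

variable {E : Type*} [NormedAddCommGroup E] [NormedSpace ℝ E]

theorem norm_integral_sub_smul_sq_le {a b : ℝ} (hab : a ≤ b) {f : ℝ → E}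
    (hf : ContinuousOn f (Icc a b)) :
    ‖∫ s in a..b, (s - a) • f s‖ ^ 2 ≤ (b - a) ^ 3 / 3 * ∫ s in a..b, ‖f s‖ ^ 2 := by
  have hw : ContinuousOn (fun s ↦ |s - a|) (Icc a b) := by fun_prop
  have hint {g : ℝ → ℝ} (hg : ContinuousOn g (Icc a b)) : IntegrableOn g (Ioc a b) :=
    hg.integrableOn_Icc.mono_set Ioc_subset_Icc_self
  calc ‖∫ s in a..b, (s - a) • f s‖ ^ 2 ≤ (∫ s in a..b, |s - a| * ‖f s‖) ^ 2 := by
        gcongr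
        refine (intervalIntegral.norm_integral_le_integral_norm hab).trans_eq ?_
        simp only [norm_smul, Real.norm_eq_abs]
    _ ≤ (∫ s in a..b, |s - a| ^ 2) * ∫ s in a..b, ‖f s‖ ^ 2 := by
        simp only [intervalIntegral.integral_of_le hab]
        exact sq_integral_mul_le_integral_sq_mul_integral_sq (hint (hw.pow 2))
          (hint (hf.norm.pow 2)) (hint (hw.mul hf.norm))
    _ = (b - a) ^ 3 / 3 * ∫ s in a..b, ‖f s‖ ^ 2 := by
        simp only [sq_abs, integral_sq_sub_left]

theorem integral_sub_smul_eq_of_hasDerivAt [CompleteSpace E] {a b : ℝ} {u u' u'' : ℝ → E}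
    (hu' : ∀ s ∈ [[a, b]], HasDerivAt u (u' s) s)
    (hu'' : ∀ s ∈ [[a, b]], HasDerivAt u' (u'' s) s)
    (hint : IntervalIntegrable u'' volume a b) :
    ∫ s in a..b, (s - a) • u'' s = (b - a) • u' b - (u b - u a) := by
  have hint' : IntervalIntegrable u' volume a b :=
    (HasDerivAt.continuousOn hu'').intervalIntegrable
  rw [intervalIntegral.integral_smul_deriv_eq_deriv_smul (fun s _ ↦ (hasDerivAt_id' s).sub_const a)
    hu'' intervalIntegrable_const hint]
  simp [intervalIntegral.integral_eq_sub_of_hasDerivAt hu' hint']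

end

/-- Backward-difference consistency estimate (used in Theorem 4.3):
‖(u(b) − u(a))/(b − a) − u′(b)‖² ≤ ((b − a)/3) ∫_a^b ‖u″(s)‖² ds. -/
theorem backward_difference_consistency
    {E : Type*} [NormedAddCommGroup E] [NormedSpace ℝ E] [CompleteSpace E]
    (a b : ℝ) (hab : a < b) (u u' u'' : ℝ → E)
    (hu' : ∀ s ∈ Set.Icc a b, HasDerivAt u (u' s) s)
    (hu'' : ∀ s ∈ Set.Icc a b, HasDerivAt u' (u'' s) s)
    (hcont : ContinuousOn u'' (Set.Icc a b)) :
    ‖(b - a)⁻¹ • (u b - u a) - u' b‖ ^ 2 ≤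
      ((b - a) / 3) * ∫ s in a..b, ‖u'' s‖ ^ 2 := by
  have hba : 0 < b - a := sub_pos.mpr hab
  have huIcc : [[a, b]] = Icc a b := uIcc_of_le hab.le
  have htaylor : (b - a)⁻¹ • (u b - u a) - u' b =
      -((b - a)⁻¹ • ∫ s in a..b, (s - a) • u'' s) := by
    rw [integral_sub_smul_eq_of_hasDerivAt (huIcc ▸ hu') (huIcc ▸ hu'')
      (huIcc ▸ hcont).intervalIntegrable]
    match_scalars <;> field_simp
  calc ‖(b - a)⁻¹ • (u b - u a) - u' b‖ ^ 2
      = (b - a)⁻¹ ^ 2 * ‖∫ s in a..b, (s - a) • u'' s‖ ^ 2 := by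
        rw [htaylor, norm_neg, norm_smul, mul_pow, Real.norm_of_nonneg (inv_nonneg.2 hba.le)]
    _ ≤ (b - a)⁻¹ ^ 2 * ((b - a) ^ 3 / 3 * ∫ s in a..b, ‖u'' s‖ ^ 2) := by
        gcongr
        exact norm_integral_sub_smul_sq_le hab.le hcont
    _ = (b - a) / 3 * ∫ s in a..b, ‖u'' s‖ ^ 2 := by
        field_simp
end
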